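/- For the dP1 quiver with potential above, the mutation at vertex 1 yields the quiver with arrows a*: 2→1, b*: 3→1, R_1*, R_2*: 1→4, c_1, c_2: 2→3, d_2: 3→4, R_3, [aR_1], [aR_2]: 4→2, and potential S̄ = c_2 R_3 R_1* b* + c_1 R_3 R_2* b* + d_2 c_2 [aR_2] − d_2 c_1 [aR_1] + [aR_1] R_1* a* + [aR_2] R_2* a*; in particular the intermediate potential S̃ decomposes, after the right equivalence φ (d_1 ↦ d_1 − R_1* b*, d_3 ↦ −d_3 + R_2* b*, [bR_1] ↦ [bR_1] + c_2 R_3, [bR_2] ↦ [bR_2] + c_1 R_3), as a trivial part plus the reduced potential S̄. -/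

import Mathlib

/-- A quiver given by a vertex set, an arrow set and source/target maps. -/
structure Quiv where
  V : Type
  E : Type
  s : E → V
  t : E → V

namespace Quiv

/-- A path `a₁ a₂ ⋯ aₙ`, written with the composition-of-functions convention,
is a list of arrows such that the source of each arrow is the target of the next one. -/
def IsPath (q : Quiv) : List q.E → Prop
  | [] => True
  | [_] => True
  | a :: b :: l => q.s a = q.t b ∧ IsPath q (b :: l)

variable (q : Quiv)

/-- The source of a (nonempty) path. -/
def pSrc (l : List q.E) : Option q.V := l.getLast?.map q.s

/-- The target of a (nonempty) path. -/
def pTgt (l : List q.E) : Option q.V := l.head?.map q.t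

/-- A cycle is a nonempty path whose source equals its target. -/
def IsCycle (l : List q.E) : Prop := l ≠ [] ∧ q.IsPath l ∧ q.pSrc l = q.pTgt l

variable (K : Type) [Field K]

open Classical in
/-- The cyclic derivative of a single cycle `a₁ ⋯ aₙ` with respect to an arrow `x`:
`∑ₖ δ(x, aₖ) • a_{k+1} ⋯ aₙ a₁ ⋯ a_{k-1}`, as an element of the vector space
spanned by paths. -/
noncomputable def cycDerList (x : q.E) (l : List q.E) : List q.E →₀ K :=
  ∑ k ∈ Finset.range l.length,
    if l[k]? = some x then Finsupp.single (l.drop (k + 1) ++ l.take k) 1 else 0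

/-- The cyclic derivative of a potential (a linear combination of cycles)
with respect to an arrow `x`, extended linearly. -/
noncomputable def cycDer (x : q.E) (S : List q.E →₀ K) : List q.E →₀ K :=
  S.sum fun l c => c • q.cycDerList K x l

/-- Two potentials are cyclically equivalent if their difference lies in the span of
the elements `a₁ ⋯ a_{n-1} aₙ - a₂ ⋯ aₙ a₁` for cycles `a₁ ⋯ aₙ`. -/
def CycEquiv (S S' : List q.E →₀ K) : Prop :=
  S - S' ∈ Submodule.span K
    {x : List q.E →₀ K | ∃ l : List q.E, q.IsCycle l ∧
      x = Finsupp.single l 1 - Finsupp.single (l.rotate 1) 1}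

end Quiv

namespace Quiv

variable (q : Quiv) (K : Type) [Field K]

/-- Substitution of linear combinations of paths for arrows, extended multiplicatively
to a single path (concatenation of lists corresponds to composition of paths). -/
noncomputable def substList (f : q.E → (List q.E →₀ K)) : List q.E → (List q.E →₀ K)
  | [] => Finsupp.single [] 1
  | e :: l =>
      (f e).sum fun le ce =>
        (substList f l).sum fun lr cr => Finsupp.single (le ++ lr) (ce * cr)

/-- The algebra endomorphism of the path algebra determined by a substitution rule
`f` on arrows (fixing the vertex idempotents), applied to a potential. -/
noncomputable def subst (f : q.E → (List q.E →₀ K)) (S : List q.E →₀ K) :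
    List q.E →₀ K :=
  S.sum fun l c => c • q.substList K f l

end Quiv

/-- The arrows of the quiver `Q̃` obtained in the mutation of the completed `dP1` quiver at
vertex `1`: the reversed arrows `a* : 2 → 1`, `b* : 3 → 1`, `R₁* R₂* : 1 → 4`, the old arrows
`c₁ c₂ : 2 → 3`, `d₁ d₂ d₃ : 3 → 4`, `R₃ : 4 → 2`, and the composite (mesonic) arrows
`[aR₁] [aR₂] : 4 → 2`, `[bR₁] [bR₂] : 4 → 3`. -/
inductive MutArr : Type
  | as | bs | R1s | R2s | c1 | c2 | d1 | d2 | d3 | R3 | aR1 | aR2 | bR1 | bR2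
deriving DecidableEq

open MutArr in
/-- The quiver `Q̃` of the mutation at vertex `1` of the completed `dP1` quiver
(vertices `1, 2, 3, 4` encoded as `Fin 4`). -/
def dP1Mut : Quiv where
  V := Fin 4
  E := MutArr
  s := fun e => match e with
    | as => 1 | bs => 2 | R1s => 0 | R2s => 0 | c1 => 1 | c2 => 1
    | d1 => 2 | d2 => 2 | d3 => 2 | R3 => 3 | aR1 => 3 | aR2 => 3 | bR1 => 3 | bR2 => 3
  t := fun e => match e with
    | as => 0 | bs => 0 | R1s => 3 | R2s => 3 | c1 => 2 | c2 => 2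
    | d1 => 3 | d2 => 3 | d3 => 3 | R3 => 1 | aR1 => 1 | aR2 => 1 | bR1 => 2 | bR2 => 2

open MutArr in
/-- The intermediate potential `S̃` of the mutation at vertex `1` of the `dP1` quiver:
`S̃ = R₃d₃c₁ − R₃d₁c₂ − d₂c₁[aR₁] + d₁[bR₁] − d₃[bR₂] + d₂c₂[aR₂]
  + [aR₁]R₁*a* + [aR₂]R₂*a* + [bR₁]R₁*b* + [bR₂]R₂*b*`. -/
noncomputable def dP1MutPotTilde (K : Type) [Field K] : List dP1Mut.E →₀ K :=
  Finsupp.single [R3, d3, c1] 1 - Finsupp.single [R3, d1, c2] 1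
    - Finsupp.single [d2, c1, aR1] 1 + Finsupp.single [d1, bR1] 1
    - Finsupp.single [d3, bR2] 1 + Finsupp.single [d2, c2, aR2] 1
    + Finsupp.single [aR1, R1s, as] 1 + Finsupp.single [aR2, R2s, as] 1
    + Finsupp.single [bR1, R1s, bs] 1 + Finsupp.single [bR2, R2s, bs] 1

open MutArr in
/-- The reduced (mutated) potential
`S̄ = c₂R₃R₁*b* + c₁R₃R₂*b* + d₂c₂[aR₂] − d₂c₁[aR₁] + [aR₁]R₁*a* + [aR₂]R₂*a*`. -/
noncomputable def dP1MutPotBar (K : Type) [Field K] : List dP1Mut.E →₀ K :=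
  Finsupp.single [c2, R3, R1s, bs] 1 + Finsupp.single [c1, R3, R2s, bs] 1
    + Finsupp.single [d2, c2, aR2] 1 - Finsupp.single [d2, c1, aR1] 1
    + Finsupp.single [aR1, R1s, as] 1 + Finsupp.single [aR2, R2s, as] 1

open MutArr in
/-- The substitution rule of the right equivalence `φ`:
`d₁ ↦ d₁ − R₁*b*`, `d₃ ↦ −d₃ + R₂*b*`, `[bR₁] ↦ [bR₁] + c₂R₃`, `[bR₂] ↦ [bR₂] + c₁R₃`,
all other arrows fixed. -/
noncomputable def dP1MutPhi (K : Type) [Field K] : MutArr → (List dP1Mut.E →₀ K) :=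
  fun e => match e with
    | d1 => Finsupp.single [d1] 1 - Finsupp.single [R1s, bs] 1
    | d3 => -Finsupp.single [d3] 1 + Finsupp.single [R2s, bs] 1
    | bR1 => Finsupp.single [bR1] 1 + Finsupp.single [c2, R3] 1
    | bR2 => Finsupp.single [bR2] 1 + Finsupp.single [c1, R3] 1
    | x => Finsupp.single [x] 1

/-! Applying `φ` to `S̃` is a finite computation in the free algebra on the arrows. The cross
terms it creates cancel in pairs up to rotation of cycles: for instance `φ(d₁[bR₁])` contains
`-R₁*b*[bR₁]`, which cancels the term `[bR₁]R₁*b*` of `φ([bR₁]R₁*b*)` up to rotation, while the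
other term `c₂R₃R₁*b*` of the latter belongs to `S̄`. Hence `φ(S̃)` is `d₁[bR₁] + d₃[bR₂] + S̄`
plus a combination of differences `a₁ ⋯ aₙ - a₂ ⋯ aₙ a₁` of cycles. -/

namespace Finsupp

variable {α K : Type*}

/-- The multiplication of the free associative algebra on `α`, whose elements are linear
combinations of words. -/
noncomputable def concatMul [Semiring K] (x y : List α →₀ K) : List α →₀ K :=
  x.sum fun l c => y.sum fun l' c' => single (l ++ l') (c * c')

/-- The image of a word under the algebra endomorphism of the free algebra that sends each
letter `e` to `f e`. -/
noncomputable def substWord [Semiring K] (f : α → (List α →₀ K)) : List α → (List α →₀ K)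
  | [] => single [] 1
  | e :: l => concatMul (f e) (substWord f l)

noncomputable def substWords [Semiring K] (f : α → (List α →₀ K)) (S : List α →₀ K) :
    List α →₀ K :=
  S.sum fun l c => c • substWord f l

section Semiring

variable [Semiring K]

@[simp]
lemma single_concatMul_single (l l' : List α) (c c' : K) :
    concatMul (single l c) (single l' c') = single (l ++ l') (c * c') := by
  rw [concatMul, sum_single_index, sum_single_index] <;> simp

@[simp]
lemma add_concatMul (x x' y : List α →₀ K) :
    concatMul (x + x') y = concatMul x y + concatMul x' y :=
  sum_add_index' (by simp) fun _ _ _ => by simp [add_mul, sum_add]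

@[simp]
lemma concatMul_add (x y y' : List α →₀ K) :
    concatMul x (y + y') = concatMul x y + concatMul x y' := by
  simp only [concatMul, ← sum_add]
  refine sum_congr fun l _ => sum_add_index' (fun _ => by rw [mul_zero, single_zero])
    fun _ _ _ => by rw [mul_add, single_add]

@[simp]
lemma substWords_single (f : α → (List α →₀ K)) (l : List α) (c : K) :
    substWords f (single l c) = c • substWord f l :=
  sum_single_index (zero_smul K _)

@[simp]
lemma substWords_add (f : α → (List α →₀ K)) (S S' : List α →₀ K) :
    substWords f (S + S') = substWords f S + substWords f S' :=
  sum_add_index' (fun _ => zero_smul K _) fun _ c c' => add_smul c c' _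

end Semiring

section Ring

variable [Ring K]

@[simp]
lemma neg_concatMul (x y : List α →₀ K) : concatMul (-x) y = -concatMul x y :=
  eq_neg_of_add_eq_zero_left <| by
    rw [← add_concatMul, neg_add_cancel]; simp [concatMul]

@[simp]
lemma sub_concatMul (x x' y : List α →₀ K) :
    concatMul (x - x') y = concatMul x y - concatMul x' y := by
  rw [sub_eq_add_neg, add_concatMul, neg_concatMul, ← sub_eq_add_neg]

@[simp]
lemma concatMul_neg (x y : List α →₀ K) : concatMul x (-y) = -concatMul x y :=
  eq_neg_of_add_eq_zero_left <| by
    rw [← concatMul_add, neg_add_cancel]; simp [concatMul]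

@[simp]
lemma concatMul_sub (x y y' : List α →₀ K) :
    concatMul x (y - y') = concatMul x y - concatMul x y' := by
  rw [sub_eq_add_neg, concatMul_add, concatMul_neg, ← sub_eq_add_neg]

@[simp]
lemma substWords_sub (f : α → (List α →₀ K)) (S S' : List α →₀ K) :
    substWords f (S - S') = substWords f S - substWords f S' :=
  sum_sub_index fun _ c c' => sub_smul c c' _

end Ring

end Finsupp

namespace Quiv

variable {q : Quiv} {K : Type} [Field K]

lemma substList_eq_substWord (f : q.E → (List q.E →₀ K)) (l : List q.E) :
    q.substList K f l = Finsupp.substWord f l := by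
  induction l with
  | nil => rfl
  | cons e l ih => exact congrArg (Finsupp.concatMul (f e)) ih

lemma subst_eq_substWords (f : q.E → (List q.E →₀ K)) (S : List q.E →₀ K) :
    q.subst K f S = Finsupp.substWords f S := by
  simp only [subst, Finsupp.substWords, substList_eq_substWord]

variable (q K) in
noncomputable def cycSpan : Submodule K (List q.E →₀ K) :=
  Submodule.span K {x | ∃ l, q.IsCycle l ∧ x = Finsupp.single l 1 - Finsupp.single (l.rotate 1) 1}

lemma single_sub_single_rotate_mem_cycSpan {l l' : List q.E} (hl : q.IsCycle l)
    (hl' : l.rotate 1 = l') :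
    Finsupp.single l 1 - Finsupp.single l' 1 ∈ q.cycSpan K :=
  Submodule.subset_span ⟨l, hl, by rw [hl']⟩

lemma cycEquiv_add_of_mem_cycSpan {S D : List q.E →₀ K} (hD : D ∈ q.cycSpan K) :
    q.CycEquiv K (S + D) S := by
  rwa [CycEquiv, add_sub_cancel_left]

end Quiv

section dP1

open MutArr Finsupp

noncomputable def dP1MutRotations (K : Type) [Field K] : List dP1Mut.E →₀ K :=
  -(single [R3, d3, c1] 1 - single [d3, c1, R3] 1)
    - (single [R3, d1, c2] 1 - single [d1, c2, R3] 1)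
    + (single [R3, R2s, bs, c1] 1 - single [R2s, bs, c1, R3] 1)
    + (single [R3, R1s, bs, c2] 1 - single [R1s, bs, c2, R3] 1)
    + (single [bR1, R1s, bs] 1 - single [R1s, bs, bR1] 1)
    + (single [bR2, R2s, bs] 1 - single [R2s, bs, bR2] 1)

variable {K : Type} [Field K]

/- Stated over `MutArr` rather than `dP1Mut.E`: the two types agree only after unfolding
`dP1Mut`, so `simp` cannot match the arrows `d₁, …` (of type `MutArr`) inside terms indexed by
`dP1Mut.E`. The `change` retypes the outermost sum of `S̃`, which is elaborated across both. -/
lemma substWords_dP1MutPotTilde (f : MutArr → (List MutArr →₀ K))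
    (hd1 : f d1 = single [d1] 1 - single [R1s, bs] 1)
    (hd3 : f d3 = -single [d3] 1 + single [R2s, bs] 1)
    (hbR1 : f bR1 = single [bR1] 1 + single [c2, R3] 1)
    (hbR2 : f bR2 = single [bR2] 1 + single [c1, R3] 1)
    (hf : ∀ e, e ≠ d1 → e ≠ d3 → e ≠ bR1 → e ≠ bR2 → f e = single [e] 1) :
    substWords f (dP1MutPotTilde K) =
      (single [d1, bR1] 1 + single [d3, bR2] 1 + dP1MutPotBar K) + dP1MutRotations K := by
  rw [dP1MutPotTilde]
  change substWords f (_ + _) = _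
  simp only [substWords_add, substWords_sub, substWords_single, one_smul, substWord, hd1, hd3,
    hbR1, hbR2, ne_eq, reduceCtorEq, not_false_eq_true, hf, add_concatMul, concatMul_add,
    sub_concatMul, neg_concatMul, concatMul_sub, concatMul_neg, single_concatMul_single,
    List.cons_append, List.nil_append, mul_one, dP1MutPotBar, dP1MutRotations]
  abel

lemma subst_dP1MutPhi_dP1MutPotTilde :
    dP1Mut.subst K (dP1MutPhi K) (dP1MutPotTilde K) =
      (single [d1, bR1] 1 + single [d3, bR2] 1 + dP1MutPotBar K) + dP1MutRotations K :=
  (Quiv.subst_eq_substWords _ _).trans <| substWords_dP1MutPotTilde _ rfl rfl rfl rfl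
    fun e _ _ _ _ => by cases e <;> first | rfl | contradiction

lemma dP1MutRotations_mem_cycSpan : dP1MutRotations K ∈ dP1Mut.cycSpan K := by
  have mem : ∀ l l', dP1Mut.IsCycle l → l.rotate 1 = l' →
      single l (1 : K) - single l' 1 ∈ dP1Mut.cycSpan K :=
    fun _ _ => Quiv.single_sub_single_rotate_mem_cycSpan
  refine add_mem (add_mem (add_mem (add_mem (sub_mem (neg_mem ?_) ?_) ?_) ?_) ?_) ?_ <;>
    exact mem _ _ ⟨List.cons_ne_nil _ _, by simp [Quiv.IsPath, dP1Mut], rfl⟩ rfl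

lemma forall_mem_support_dP1MutPotBar {P : List MutArr → Prop} (h₁ : P [c2, R3, R1s, bs])
    (h₂ : P [c1, R3, R2s, bs]) (h₃ : P [d2, c2, aR2]) (h₄ : P [d2, c1, aR1])
    (h₅ : P [aR1, R1s, as]) (h₆ : P [aR2, R2s, as]) :
    ∀ l ∈ (dP1MutPotBar K).support, P l := by
  have : dP1MutPotBar K ∈ supported K K {l | P l} :=
    add_mem (add_mem (sub_mem (add_mem (add_mem (single_mem_supported K _ h₁)
      (single_mem_supported K _ h₂)) (single_mem_supported K _ h₃)) (single_mem_supported K _ h₄))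
      (single_mem_supported K _ h₅)) (single_mem_supported K _ h₆)
  exact fun l hl => (mem_supported K _).1 this hl

end dP1

open MutArr in
/-- For the `dP1` quiver with its good potential, the mutation at vertex `1`
yields the quiver with arrows `a*, b*, R₁*, R₂*, c₁, c₂, d₂, R₃, [aR₁], [aR₂]` and potential
`S̄ = c₂R₃R₁*b* + c₁R₃R₂*b* + d₂c₂[aR₂] − d₂c₁[aR₁] + [aR₁]R₁*a* + [aR₂]R₂*a*`: after the
right equivalence `φ`, the intermediate potential `S̃` decomposes as a trivial part
`d₁[bR₁] + d₃[bR₂]` plus the reduced potential `S̄`, which no longer involves the massive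
arrows `d₁, d₃, [bR₁], [bR₂]`. -/
theorem dP1_mutation_at_vertex_one (K : Type) [Field K] :
    dP1Mut.CycEquiv K
      (dP1Mut.subst K (dP1MutPhi K) (dP1MutPotTilde K))
      ((Finsupp.single [d1, bR1] 1 + Finsupp.single [d3, bR2] 1) + dP1MutPotBar K) ∧
    (∀ l ∈ ((Finsupp.single [d1, bR1] (1 : K)) + Finsupp.single [d3, bR2] 1).support,
      l.length = 2) ∧
    (∀ l ∈ (dP1MutPotBar K).support, l.length ≠ 2) ∧
    (∀ l ∈ (dP1MutPotBar K).support, ∀ x ∈ l,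
      x ≠ d1 ∧ x ≠ d3 ∧ x ≠ bR1 ∧ x ≠ bR2) := by
  refine ⟨?_, ?_, ?_, ?_⟩
  · rw [subst_dP1MutPhi_dP1MutPotTilde]
    exact Quiv.cycEquiv_add_of_mem_cycSpan dP1MutRotations_mem_cycSpan
  · intro l hl
    rcases Finset.mem_union.1 (Finsupp.support_add hl) with h | h <;>
      rw [Finset.mem_singleton.1 (Finsupp.support_single_subset h)] <;> rfl
  · refine forall_mem_support_dP1MutPotBar ?_ ?_ ?_ ?_ ?_ ?_ <;> decide
  -- Retyped over `MutArr`, for the same reason as in `substWords_dP1MutPotTilde`.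
  · show ∀ l : List MutArr, l ∈ (dP1MutPotBar K).support → ∀ x ∈ l,
      x ≠ d1 ∧ x ≠ d3 ∧ x ≠ bR1 ∧ x ≠ bR2
    refine forall_mem_support_dP1MutPotBar ?_ ?_ ?_ ?_ ?_ ?_ <;> decide
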